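/- Let V be a pre-Hilbert space, let ξ : [0,1] → End(V) be a family of skew-symmetric linear operators, and suppose ψ, φ : [0,1] → V are differentiable curves (with respect to the norm topology) satisfying ψ'(t) = ξ(t)ψ(t) and φ'(t) = ξ(t)φ(t) for all t, with ψ(0) = φ(0). Then ψ(t) = φ(t) for all t ∈ [0,1]. -/

import Mathlib

open scoped InnerProductSpace

/-!
For a skew-symmetric `A`, the derivative `⟪A δ, δ⟫ + ⟪δ, A δ⟫` of `⟪δ, δ⟫` along a solution of
`δ' = A(t) δ` vanishes, so solutions have constant norm. The difference of two solutions is again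
a solution, starting at `0`, hence stays `0`.
-/

section SkewODE

variable {𝕜 V : Type*} [RCLike 𝕜] [NormedAddCommGroup V] [InnerProductSpace 𝕜 V]
  [NormedSpace ℝ V]

theorem hasDerivAt_inner_self_of_skew {A : V →ₗ[𝕜] V} (hA : ∀ x y, ⟪A x, y⟫_𝕜 = -⟪x, A y⟫_𝕜)
    {δ : ℝ → V} {t : ℝ} (hδ : HasDerivAt δ (A (δ t)) t) :
    HasDerivAt (fun s => ⟪δ s, δ s⟫_𝕜) 0 t := by
  have h := hδ.inner 𝕜 hδ
  rwa [hA, add_neg_cancel] at h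

theorem norm_eq_of_hasDerivAt_skew {ξ : ℝ → V →ₗ[𝕜] V} {a b : ℝ}
    (hskew : ∀ t ∈ Set.Icc a b, ∀ x y, ⟪ξ t x, y⟫_𝕜 = -⟪x, ξ t y⟫_𝕜) {δ : ℝ → V}
    (hδ : ∀ t ∈ Set.Icc a b, HasDerivAt δ (ξ t (δ t)) t) :
    ∀ t ∈ Set.Icc a b, ‖δ t‖ = ‖δ a‖ := by
  have hderiv t (ht : t ∈ Set.Icc a b) := hasDerivAt_inner_self_of_skew (hskew t ht) (hδ t ht)
  have hconst := constant_of_has_deriv_right_zero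
    (fun t ht => (hderiv t ht).continuousAt.continuousWithinAt)
    (fun t ht => (hderiv t (Set.Ico_subset_Icc_self ht)).hasDerivWithinAt)
  intro t ht
  have h := hconst t ht
  simp only [inner_self_eq_norm_sq_to_K] at h
  exact (sq_eq_sq₀ (norm_nonneg _) (norm_nonneg _)).mp (mod_cast h)

end SkewODE

/-- Uniqueness of solutions of `ψ' = ξ(t) ψ` for skew-symmetric `ξ(t)` on a
pre-Hilbert space. -/
theorem uniqueness_of_solutions
    {V : Type*} [NormedAddCommGroup V] [InnerProductSpace ℂ V]
    (ξ : ℝ → V →ₗ[ℂ] V)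
    (hskew : ∀ t ∈ Set.Icc (0:ℝ) 1, ∀ x y : V, ⟪ξ t x, y⟫_ℂ = -⟪x, ξ t y⟫_ℂ)
    (ψ φ : ℝ → V)
    (hψ : ∀ t ∈ Set.Icc (0:ℝ) 1, HasDerivAt ψ (ξ t (ψ t)) t)
    (hφ : ∀ t ∈ Set.Icc (0:ℝ) 1, HasDerivAt φ (ξ t (φ t)) t)
    (h0 : ψ 0 = φ 0) :
    ∀ t ∈ Set.Icc (0:ℝ) 1, ψ t = φ t := by
  have hdiff : ∀ t ∈ Set.Icc (0:ℝ) 1, HasDerivAt (ψ - φ) (ξ t ((ψ - φ) t)) t := fun t ht => by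
    simpa only [Pi.sub_apply, map_sub] using (hψ t ht).sub (hφ t ht)
  intro t ht
  have h := norm_eq_of_hasDerivAt_skew hskew hdiff t ht
  rwa [Pi.sub_apply, Pi.sub_apply, h0, sub_self, norm_zero, norm_eq_zero, sub_eq_zero] at h
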